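/- For every R > 0 there exists A > 0 such that |B(t + iη)| ≤ A η^{−1} e^{t/R} for all t > 0 and all η ∈ (0, √π/2). -/

import Mathlib

/-!
With `w = 2√π z` one has `B(z) = (w cot w - 1 + w²/3) / (√π w³)`. Near `0` the numerator is
`O(|w|⁴)` by the Taylor expansions of `sin` and `cos`; on the upper half-plane
`|cot w| ≤ coth (Im w) ≤ 1 + 1/Im w`, which bounds it by `O(|w|³ / Im w)` away from `0`. Together
they give `|B(z)| ≤ 2 / (π Im z)`, so the factor `e^{t/R}` is not even needed.
-/

open MeasureTheory Filter

/-- The Borel transform `B(t) = (2√π t cot(2√π t) - 1 + (4π/3)t²)/(8π² t³)`. -/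
noncomputable def borelB (t : ℂ) : ℂ :=
  (2 * (Real.sqrt Real.pi : ℂ) * t * Complex.cot (2 * (Real.sqrt Real.pi : ℂ) * t)
      - 1 + 4 * (Real.pi : ℂ) * t ^ 2 / 3) / (8 * (Real.pi : ℂ) ^ 2 * t ^ 3)

namespace Complex

theorem sinh_im_le_norm_sin (w : ℂ) : Real.sinh w.im ≤ ‖sin w‖ := by
  have h := norm_sub_norm_le (exp (-w * I)) (exp (w * I))
  simp only [norm_exp, neg_mul, neg_re, mul_re, I_re, I_im, mul_zero, mul_one, zero_sub, neg_neg] at h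
  rw [sin, norm_div, norm_mul, norm_I, mul_one, Complex.norm_two, Real.sinh_eq]
  simpa [neg_mul] using div_le_div_of_nonneg_right h zero_le_two

theorem norm_cos_le_cosh_im (w : ℂ) : ‖cos w‖ ≤ Real.cosh w.im := by
  have h := norm_add_le (exp (w * I)) (exp (-w * I))
  simp only [norm_exp, neg_mul, neg_re, mul_re, I_re, I_im, mul_zero, mul_one, zero_sub, neg_neg] at h
  rw [cos, norm_div, Complex.norm_two, Real.cosh_eq, add_comm (Real.exp _)]
  simpa [neg_mul] using div_le_div_of_nonneg_right h zero_le_two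

theorem norm_cot_le_one_add_inv_im {w : ℂ} (hw : 0 < w.im) : ‖cot w‖ ≤ 1 + 1 / w.im := by
  have hsinh : 0 < Real.sinh w.im := Real.sinh_pos_iff.mpr hw
  have hsin : 0 < ‖sin w‖ := hsinh.trans_le (sinh_im_le_norm_sin w)
  have hcoth : Real.cosh w.im ≤ (1 + 1 / w.im) * Real.sinh w.im := by
    have h1 : Real.cosh w.im - Real.sinh w.im ≤ 1 := by
      rw [Real.cosh_sub_sinh, Real.exp_le_one_iff]; linarith
    have h2 : 1 ≤ Real.sinh w.im / w.im := (one_le_div hw).mpr (Real.self_le_sinh_iff.mpr hw.le)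
    rw [add_mul, one_mul, one_div_mul_eq_div]
    linarith
  rw [cot_eq_cos_div_sin, norm_div, div_le_iff₀ hsin]
  calc ‖cos w‖ ≤ Real.cosh w.im := norm_cos_le_cosh_im w
    _ ≤ (1 + 1 / w.im) * Real.sinh w.im := hcoth
    _ ≤ (1 + 1 / w.im) * ‖sin w‖ := by gcongr; exact sinh_im_le_norm_sin w

end Complex

open Complex

-- `w cot w = 1 - w²/3 - w⁴/45 - ⋯`
noncomputable def cotRemainder (w : ℂ) : ℂ := w * cot w - (1 - w ^ 2 / 3)

theorem norm_cotRemainder_le_of_norm_le_one {w : ℂ} (hw0 : w ≠ 0) (hw : ‖w‖ ≤ 1) :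
    ‖cotRemainder w‖ ≤ ‖w‖ ^ 4 / 4 := by
  set r := ‖w‖
  set es := sin w - (w - w ^ 3 / 6)
  set ec := cos w - (1 - w ^ 2 / 2)
  have hes : ‖es‖ ≤ r ^ 5 / 100 := sin_bound hw
  have hec : ‖ec‖ ≤ r ^ 4 * (5 / 96) := cos_bound hw
  have hr : 0 < r := norm_pos_iff.mpr hw0
  have hr2 : r ^ 2 ≤ 1 := pow_le_one₀ hr.le hw
  have hsin : r / 2 ≤ ‖sin w‖ := by
    have h1 : sin w = w - (w ^ 3 / 6 - es) := by ring
    have h2 := norm_sub_norm_le w (w ^ 3 / 6 - es)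
    have h3 := norm_sub_le (w ^ 3 / 6) es
    simp only [norm_div, norm_pow, RCLike.norm_ofNat] at h3
    rw [← h1] at h2
    nlinarith [pow_pos hr 3]
  have hnum : cotRemainder w * sin w = w * ec - es + w ^ 2 / 3 * es - w ^ 5 / 18 := by
    have : sin w ≠ 0 := norm_pos_iff.mp ((half_pos hr).trans_le hsin)
    rw [cotRemainder, cot_eq_cos_div_sin]
    field_simp
    ring
  have hnum_le : ‖cotRemainder w‖ * ‖sin w‖ ≤ r ^ 5 / 8 := by
    have h1 := norm_sub_le (w * ec - es + w ^ 2 / 3 * es) (w ^ 5 / 18)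
    have h2 := norm_add_le (w * ec - es) (w ^ 2 / 3 * es)
    have h3 := norm_sub_le (w * ec) es
    simp only [norm_mul, norm_div, norm_pow, RCLike.norm_ofNat] at h1 h2 h3
    rw [← norm_mul, hnum]
    nlinarith [norm_nonneg es, norm_nonneg ec, pow_pos hr 5]
  nlinarith [norm_nonneg (cotRemainder w), pow_pos hr 4]

theorem norm_cotRemainder_le_of_im_pos {w : ℂ} (hw : 0 < w.im) :
    ‖cotRemainder w‖ ≤ 4 * ‖w‖ ^ 3 / w.im := by
  set r := ‖w‖
  have him : w.im ≤ r := (le_abs_self _).trans (abs_im_le_norm w)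
  have hr : 0 < r := hw.trans_le him
  rw [le_div_iff₀ hw]
  rcases le_or_gt r 1 with hsmall | hlarge
  · have h := norm_cotRemainder_le_of_norm_le_one (norm_pos_iff.mp hr) hsmall
    nlinarith [mul_le_mul h him hw.le (by positivity), pow_le_one₀ (n := 2) hr.le hsmall, pow_pos hr 3]
  · have hcot : ‖w * cot w‖ ≤ r * (1 + 1 / w.im) := by
      rw [norm_mul]; gcongr; exact norm_cot_le_one_add_inv_im hw
    have htri := norm_sub_le (w * cot w) (1 - w ^ 2 / 3)
    have hpoly := norm_sub_le (1 : ℂ) (w ^ 2 / 3)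
    simp only [norm_one, norm_div, norm_pow, RCLike.norm_ofNat] at hpoly
    have hinv : r * (1 + 1 / w.im) * w.im = r * w.im + r := by field_simp
    rw [cotRemainder]
    nlinarith [pow_pos hr 3]

theorem borelB_eq_cotRemainder (z : ℂ) :
    borelB z = cotRemainder (2 * (Real.sqrt Real.pi : ℂ) * z) /
      ((Real.sqrt Real.pi : ℂ) * (2 * (Real.sqrt Real.pi : ℂ) * z) ^ 3) := by
  have hsq : (Real.sqrt Real.pi : ℂ) ^ 2 = Real.pi := by
    exact_mod_cast Real.sq_sqrt Real.pi_pos.le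
  rw [borelB, cotRemainder]
  congr 1
  · linear_combination (-4 * z ^ 2 / 3) * hsq
  · linear_combination (-8 * z ^ 3 * (Real.pi + (Real.sqrt Real.pi : ℂ) ^ 2)) * hsq

theorem norm_borelB_le {z : ℂ} (hz : 0 < z.im) : ‖borelB z‖ ≤ 2 / (Real.pi * z.im) := by
  set s := Real.sqrt Real.pi
  have hs : 0 < s := Real.sqrt_pos.mpr Real.pi_pos
  have hs2 : s * s = Real.pi := Real.mul_self_sqrt Real.pi_pos.le
  set w := 2 * (s : ℂ) * z
  have hw : w.im = 2 * s * z.im := by simp [w]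
  have hwim : 0 < w.im := by rw [hw]; positivity
  have hwn : 0 < ‖w‖ := norm_pos_iff.mpr fun h => by simp [h] at hwim
  rw [borelB_eq_cotRemainder, norm_div, norm_mul, norm_pow, norm_real, Real.norm_of_nonneg hs.le,
    div_le_iff₀ (by positivity)]
  calc ‖cotRemainder w‖ ≤ 4 * ‖w‖ ^ 3 / w.im := norm_cotRemainder_le_of_im_pos hwim
    _ = 2 / (Real.pi * z.im) * (s * ‖w‖ ^ 3) := by
      rw [hw, ← hs2]; field_simp; ring

/-- For every `R > 0` there is `A > 0` with `|B(t+iη)| ≤ A η⁻¹ e^{t/R}` for all `t > 0`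
and all `η ∈ (0, √π/2)`. -/
theorem borelB_upper_half_plane_bound (R : ℝ) (hR : 0 < R) :
    ∃ A : ℝ, 0 < A ∧
      ∀ t : ℝ, 0 < t → ∀ η : ℝ, η ∈ Set.Ioo 0 (Real.sqrt Real.pi / 2) →
        ‖borelB ((t : ℂ) + (η : ℂ) * Complex.I)‖ ≤
          A * η⁻¹ * Real.exp (t / R) := by
  refine ⟨2, two_pos, fun t ht η hη => ?_⟩
  have hη : 0 < η := hη.1
  have him : ((t : ℂ) + (η : ℂ) * I).im = η := by simp
  have hB := norm_borelB_le (z := (t : ℂ) + (η : ℂ) * I) (by rw [him]; exact hη)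
  rw [him] at hB
  calc ‖borelB ((t : ℂ) + (η : ℂ) * I)‖ ≤ 2 / (Real.pi * η) := hB
    _ ≤ 2 / η := div_le_div_of_nonneg_left zero_le_two hη
      (le_mul_of_one_le_left hη.le (by linarith [Real.pi_gt_three]))
    _ = 2 * η⁻¹ * 1 := by ring
    _ ≤ 2 * η⁻¹ * Real.exp (t / R) := by
      gcongr
      exact Real.one_le_exp (by positivity)
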